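/- arXiv:1506.06887 — 6 statements merged into one kernel-verified Lean document; each statement's English description precedes it below -/
import Mathlib

section
/- Let t, ζ ∈ ℂ with t ≠ 0, ζ ≠ 0, t⁴ + 1 ≠ 0, and set κ = t², u = 2t³/(t⁴ + 1). Assume ζ ≠ κ, ζ ≠ −κ, κζ ≠ 1, κζ ≠ −1. Define X = ζ²·((ζ² − κ²)/(κ²ζ² − 1))², Y = −(ζ − κ)(κζ + 1)/((κζ − 1)(ζ + κ)), and η = (Y + Y⁻¹)·(κ² + 1)². Then −u⁴·(X² + 1)(Y + 1)² + X·Y·(κ² + 1)^{−6}·Q₂(η) = 0, where Q₂(η) = η³ + 2(κ⁴ + 6κ² − 3)η² − 4(κ⁸ − 4κ⁶ + 2κ⁴ + 12κ² − 3)η − 8(κ² + 1)²(κ⁸ + 14κ⁴ − 8κ² + 1). -/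
/-!
Write `Y = -a/b` with `a = (ζ - κ)(κζ + 1)`, `b = (κζ - 1)(ζ + κ)` and `X = ζ²(N/D)²` with
`N = ζ² - κ²`, `D = κ²ζ² - 1`. Then `ab = ND`, `b - a = 2ζ(κ² - 1)` and `Y + Y⁻¹ = -(a² + b²)/(ab)`,
so after clearing denominators the curve equation becomes a single polynomial identity of
degree 12 in `ζ`: the homogenised cubic `Q₂` evaluated at `(-(a² + b²)(κ² + 1)², ab)` equals
`-64 κ⁶ (κ² + 1)² (κ² - 1)² (ζ⁴N⁴ + D⁴)`. Finally `u⁴ = 16 κ⁶ / (κ² + 1)⁴` since `κ = t²`.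
-/

variable {K : Type*} [Field K]

def spectralQ₂ (κ η : K) : K :=
  η ^ 3 + 2 * (κ ^ 4 + 6 * κ ^ 2 - 3) * η ^ 2
    - 4 * (κ ^ 8 - 4 * κ ^ 6 + 2 * κ ^ 4 + 12 * κ ^ 2 - 3) * η
    - 8 * (κ ^ 2 + 1) ^ 2 * (κ ^ 8 + 14 * κ ^ 4 - 8 * κ ^ 2 + 1)

/-- The curve of the paper at `p = 2`, with `c` standing for `e^{-λ/2p}`. -/
def lmoCurve (c κ X Y : K) : K :=
  -c * (X ^ 2 + 1) * (Y + 1) ^ 2 +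
    X * Y * ((κ ^ 2 + 1) ^ 6)⁻¹ * spectralQ₂ κ ((Y + Y⁻¹) * (κ ^ 2 + 1) ^ 2)

theorem spectralQ₂_div_mul_pow_three (κ w : K) {m : K} (hm : m ≠ 0) :
    spectralQ₂ κ (w / m) * m ^ 3 =
      w ^ 3 + 2 * (κ ^ 4 + 6 * κ ^ 2 - 3) * w ^ 2 * m
        - 4 * (κ ^ 8 - 4 * κ ^ 6 + 2 * κ ^ 4 + 12 * κ ^ 2 - 3) * w * m ^ 2
        - 8 * (κ ^ 2 + 1) ^ 2 * (κ ^ 8 + 14 * κ ^ 4 - 8 * κ ^ 2 + 1) * m ^ 3 := by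
  unfold spectralQ₂
  field_simp

theorem neg_div_add_inv {a b : K} (ha : a ≠ 0) (hb : b ≠ 0) :
    -a / b + (-a / b)⁻¹ = -(a ^ 2 + b ^ 2) / (a * b) := by
  field_simp
  ring

theorem lmoCurve_eq_of_factors {κ ζ a b N D : K} (ha : a ≠ 0) (hb : b ≠ 0) (hD : D ≠ 0)
    (hs : κ ^ 2 + 1 ≠ 0) (hab : a * b = N * D) (hba : b - a = 2 * ζ * (κ ^ 2 - 1)) :
    lmoCurve (16 * κ ^ 6 / (κ ^ 2 + 1) ^ 4) κ (ζ ^ 2 * (N / D) ^ 2) (-a / b) =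
      -ζ ^ 2 / ((κ ^ 2 + 1) ^ 6 * D ^ 4 * b ^ 2) *
        (64 * κ ^ 6 * (κ ^ 2 + 1) ^ 2 * (κ ^ 2 - 1) ^ 2 * (ζ ^ 4 * N ^ 4 + D ^ 4) +
          spectralQ₂ κ (-(a ^ 2 + b ^ 2) / (a * b) * (κ ^ 2 + 1) ^ 2) * (a * b) ^ 3) := by
  unfold lmoCurve
  rw [neg_div_add_inv ha hb]
  generalize spectralQ₂ κ _ = q
  obtain rfl : N = a * b / D := by field_simp; exact hab.symm
  obtain rfl : a = b - 2 * ζ * (κ ^ 2 - 1) := by linear_combination -hba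
  field_simp
  ring

theorem spectralQ₂_param (κ ζ : K) (hab : (ζ - κ) * (κ * ζ + 1) * ((κ * ζ - 1) * (ζ + κ)) ≠ 0) :
    spectralQ₂ κ (-(((ζ - κ) * (κ * ζ + 1)) ^ 2 + ((κ * ζ - 1) * (ζ + κ)) ^ 2) /
        ((ζ - κ) * (κ * ζ + 1) * ((κ * ζ - 1) * (ζ + κ))) * (κ ^ 2 + 1) ^ 2) *
      ((ζ - κ) * (κ * ζ + 1) * ((κ * ζ - 1) * (ζ + κ))) ^ 3 =
    -64 * κ ^ 6 * (κ ^ 2 + 1) ^ 2 * (κ ^ 2 - 1) ^ 2 *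
      (ζ ^ 4 * (ζ ^ 2 - κ ^ 2) ^ 4 + (κ ^ 2 * ζ ^ 2 - 1) ^ 4) := by
  rw [div_mul_eq_mul_div, spectralQ₂_div_mul_pow_three _ _ hab]
  ring

theorem lmoCurve_param (κ ζ : K) (hs : κ ^ 2 + 1 ≠ 0) (h1 : ζ ≠ κ) (h2 : ζ ≠ -κ)
    (h3 : κ * ζ ≠ 1) (h4 : κ * ζ ≠ -1) :
    lmoCurve (16 * κ ^ 6 / (κ ^ 2 + 1) ^ 4) κ
      (ζ ^ 2 * ((ζ ^ 2 - κ ^ 2) / (κ ^ 2 * ζ ^ 2 - 1)) ^ 2)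
      (-((ζ - κ) * (κ * ζ + 1)) / ((κ * ζ - 1) * (ζ + κ))) = 0 := by
  have hζκ : ζ + κ ≠ 0 := fun h => h2 (eq_neg_of_add_eq_zero_left h)
  have hκζ : κ * ζ + 1 ≠ 0 := fun h => h4 (eq_neg_of_add_eq_zero_left h)
  have ha : (ζ - κ) * (κ * ζ + 1) ≠ 0 := mul_ne_zero (sub_ne_zero.mpr h1) hκζ
  have hb : (κ * ζ - 1) * (ζ + κ) ≠ 0 := mul_ne_zero (sub_ne_zero.mpr h3) hζκ
  have hD : κ ^ 2 * ζ ^ 2 - 1 ≠ 0 := by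
    rw [show κ ^ 2 * ζ ^ 2 - 1 = (κ * ζ - 1) * (κ * ζ + 1) by ring]
    exact mul_ne_zero (sub_ne_zero.mpr h3) hκζ
  rw [lmoCurve_eq_of_factors ha hb hD hs (by ring) (by ring), spectralQ₂_param κ ζ (mul_ne_zero ha hb)]
  ring

theorem stmt_3_general (t ζ : ℂ) (ht4 : t ^ 4 + 1 ≠ 0)
    (κ u : ℂ) (hκ : κ = t ^ 2) (hu : u = 2 * t ^ 3 / (t ^ 4 + 1))
    (h1 : ζ ≠ κ) (h2 : ζ ≠ -κ) (h3 : κ * ζ ≠ 1) (h4 : κ * ζ ≠ -1)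
    (X Y η : ℂ)
    (hX : X = ζ ^ 2 * ((ζ ^ 2 - κ ^ 2) / (κ ^ 2 * ζ ^ 2 - 1)) ^ 2)
    (hY : Y = -((ζ - κ) * (κ * ζ + 1)) / ((κ * ζ - 1) * (ζ + κ)))
    (hη : η = (Y + Y⁻¹) * (κ ^ 2 + 1) ^ 2) :
    -u ^ 4 * (X ^ 2 + 1) * (Y + 1) ^ 2 +
      X * Y * ((κ ^ 2 + 1) ^ 6)⁻¹ *
        (η ^ 3 + 2 * (κ ^ 4 + 6 * κ ^ 2 - 3) * η ^ 2
          - 4 * (κ ^ 8 - 4 * κ ^ 6 + 2 * κ ^ 4 + 12 * κ ^ 2 - 3) * η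
          - 8 * (κ ^ 2 + 1) ^ 2 * (κ ^ 8 + 14 * κ ^ 4 - 8 * κ ^ 2 + 1)) = 0 := by
  subst hκ hu hX hY hη
  have hs : (t ^ 2) ^ 2 + 1 ≠ 0 := by rwa [← pow_mul]
  have hu4 : (2 * t ^ 3 / (t ^ 4 + 1)) ^ 4 = 16 * (t ^ 2) ^ 6 / ((t ^ 2) ^ 2 + 1) ^ 4 := by
    rw [div_pow]; ring
  rw [hu4]
  exact lmoCurve_param _ ζ hs h1 h2 h3 h4

/-- The rational parametrization `(X(ζ), Y(ζ))` satisfies the polynomial equation of the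
LMO spectral curve of the `(2,2,2)` (D₄) Seifert geometry. -/
theorem stmt_3 (t ζ : ℂ) (ht : t ≠ 0) (hζ : ζ ≠ 0) (ht4 : t ^ 4 + 1 ≠ 0)
    (κ u : ℂ) (hκ : κ = t ^ 2) (hu : u = 2 * t ^ 3 / (t ^ 4 + 1))
    (h1 : ζ ≠ κ) (h2 : ζ ≠ -κ) (h3 : κ * ζ ≠ 1) (h4 : κ * ζ ≠ -1)
    (X Y η : ℂ)
    (hX : X = ζ ^ 2 * ((ζ ^ 2 - κ ^ 2) / (κ ^ 2 * ζ ^ 2 - 1)) ^ 2)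
    (hY : Y = -((ζ - κ) * (κ * ζ + 1)) / ((κ * ζ - 1) * (ζ + κ)))
    (hη : η = (Y + Y⁻¹) * (κ ^ 2 + 1) ^ 2) :
    -u ^ 4 * (X ^ 2 + 1) * (Y + 1) ^ 2 +
      X * Y * ((κ ^ 2 + 1) ^ 6)⁻¹ *
        (η ^ 3 + 2 * (κ ^ 4 + 6 * κ ^ 2 - 3) * η ^ 2
          - 4 * (κ ^ 8 - 4 * κ ^ 6 + 2 * κ ^ 4 + 12 * κ ^ 2 - 3) * η
          - 8 * (κ ^ 2 + 1) ^ 2 * (κ ^ 8 + 14 * κ ^ 4 - 8 * κ ^ 2 + 1)) = 0 :=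
  stmt_3_general t ζ ht4 κ u hκ hu h1 h2 h3 h4 X Y η hX hY hη
end

section
/- Let t, ζ ∈ ℂ with t ≠ 0, ζ ≠ 0, t⁶ + 1 ≠ 0, and set κ = t³, u = 2t⁴/(t⁶ + 1). Assume ζ ≠ κ, ζ ≠ −κ, κζ ≠ 1, κζ ≠ −1. Define X = ζ^{−2}·((ζ²κ² − 1)/(ζ² − κ²))³, Y = −(ζ − κ)(κζ + 1)/((κζ − 1)(ζ + κ)), and η = (Y + Y⁻¹)·(κ² + 1)². Then u⁶·(X² + 1)(Y + 1)² + X·Y·(κ² + 1)^{−8}·Q₃(η) = 0, where Q₃(η) = η⁴ + 8(2κ² − 1)η³ − 8(κ⁸ − 4κ⁴ + 12κ² − 3)η² − 32(2κ¹⁰ + 3κ⁸ + 8κ⁶ + 4κ⁴ − 6κ² + 1)η + 16(κ² + 1)²(κ² − 1)(κ⁴ − 4κ² + 1)(κ⁶ + 3κ⁴ + 5κ² − 1). -/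
/-!
All quantities are rational functions of `κ` and `ζ`. Put `P = ζ² - κ²`, `M = κ²ζ² - 1`,
`N = κ²(ζ² - 1)² + ζ²(κ² - 1)²` and `W = (κζ - 1)(ζ + κ)`. Then `X = M³ / (ζ²P³)`,
`Y = -PM / W²`, `Y + 1 = 2ζ(κ² - 1) / W` and `η = -2(κ² + 1)²N / (PM)`, while `κ = t³` makes
`u⁶ = 64κ⁸ / (κ² + 1)⁶` rational in `κ`. The one substantial identity is
`Q₃(η)·(PM)⁴ = 256κ⁸(κ² - 1)²(κ² + 1)²(M⁶ + ζ⁴P⁶)`; with it the curve equation reduces to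
`(X² + 1)ζ²P³M³ = X(M⁶ + ζ⁴P⁶)`, which is immediate from the formula for `X`.
-/

section LMOCurve

variable {K : Type*} [Field K]

def lmoQ₃ (κ η : K) : K :=
  η ^ 4 + 8 * (2 * κ ^ 2 - 1) * η ^ 3
    - 8 * (κ ^ 8 - 4 * κ ^ 4 + 12 * κ ^ 2 - 3) * η ^ 2
    - 32 * (2 * κ ^ 10 + 3 * κ ^ 8 + 8 * κ ^ 6 + 4 * κ ^ 4 - 6 * κ ^ 2 + 1) * η
    + 16 * (κ ^ 2 + 1) ^ 2 * (κ ^ 2 - 1) * (κ ^ 4 - 4 * κ ^ 2 + 1)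
      * (κ ^ 6 + 3 * κ ^ 4 + 5 * κ ^ 2 - 1)

def lmoY (κ ζ : K) : K := -((ζ - κ) * (κ * ζ + 1)) / ((κ * ζ - 1) * (ζ + κ))

theorem two_mul_pow_four_div_pow_six (t : K) :
    (2 * t ^ 4 / (t ^ 6 + 1)) ^ 6 = 64 * (t ^ 3) ^ 8 / ((t ^ 3) ^ 2 + 1) ^ 6 := by
  rw [← pow_mul, div_pow]
  ring

variable {κ ζ : K}

theorem lmoY_add_one (h₁ : κ * ζ - 1 ≠ 0) (h₂ : ζ + κ ≠ 0) :
    lmoY κ ζ + 1 = 2 * ζ * (κ ^ 2 - 1) / ((κ * ζ - 1) * (ζ + κ)) := by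
  rw [lmoY, div_add_one (mul_ne_zero h₁ h₂)]
  ring

theorem lmoY_eq (h₁ : κ * ζ - 1 ≠ 0) (h₂ : ζ + κ ≠ 0) :
    lmoY κ ζ = -((ζ ^ 2 - κ ^ 2) * (κ ^ 2 * ζ ^ 2 - 1)) / ((κ * ζ - 1) * (ζ + κ)) ^ 2 := by
  have h := mul_ne_zero h₁ h₂
  rw [lmoY, div_eq_div_iff h (pow_ne_zero 2 h)]
  ring

theorem lmoY_add_inv (h₁ : κ * ζ - 1 ≠ 0) (h₂ : ζ + κ ≠ 0) (h₃ : ζ - κ ≠ 0)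
    (h₄ : κ * ζ + 1 ≠ 0) :
    lmoY κ ζ + (lmoY κ ζ)⁻¹ = -2 * (κ ^ 2 * (ζ ^ 2 - 1) ^ 2 + ζ ^ 2 * (κ ^ 2 - 1) ^ 2)
      / ((ζ ^ 2 - κ ^ 2) * (κ ^ 2 * ζ ^ 2 - 1)) := by
  have hden := mul_ne_zero h₁ h₂
  have hnum := neg_ne_zero.mpr (mul_ne_zero h₃ h₄)
  have hPM : (ζ ^ 2 - κ ^ 2) * (κ ^ 2 * ζ ^ 2 - 1) ≠ 0 := by
    rw [show (ζ ^ 2 - κ ^ 2) * (κ ^ 2 * ζ ^ 2 - 1)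
      = (ζ - κ) * (κ * ζ + 1) * ((κ * ζ - 1) * (ζ + κ)) by ring]
    exact mul_ne_zero (mul_ne_zero h₃ h₄) hden
  rw [lmoY, inv_div, div_add_div _ _ hden hnum,
    div_eq_div_iff (mul_ne_zero hden hnum) hPM]
  ring

theorem lmoQ₃_eq (hP : ζ ^ 2 - κ ^ 2 ≠ 0) (hM : κ ^ 2 * ζ ^ 2 - 1 ≠ 0) :
    lmoQ₃ κ (-2 * (κ ^ 2 + 1) ^ 2 * (κ ^ 2 * (ζ ^ 2 - 1) ^ 2 + ζ ^ 2 * (κ ^ 2 - 1) ^ 2)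
      / ((ζ ^ 2 - κ ^ 2) * (κ ^ 2 * ζ ^ 2 - 1))) =
    256 * κ ^ 8 * (κ ^ 2 - 1) ^ 2 * (κ ^ 2 + 1) ^ 2
      * ((κ ^ 2 * ζ ^ 2 - 1) ^ 6 + ζ ^ 4 * (ζ ^ 2 - κ ^ 2) ^ 6)
      / ((ζ ^ 2 - κ ^ 2) * (κ ^ 2 * ζ ^ 2 - 1)) ^ 4 := by
  unfold lmoQ₃
  field_simp
  ring

end LMOCurve

theorem stmt_4_general (t ζ : ℂ) (hζ : ζ ≠ 0) (ht6 : t ^ 6 + 1 ≠ 0)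
    (κ u : ℂ) (hκ : κ = t ^ 3) (hu : u = 2 * t ^ 4 / (t ^ 6 + 1))
    (h1 : ζ ≠ κ) (h2 : ζ ≠ -κ) (h3 : κ * ζ ≠ 1) (h4 : κ * ζ ≠ -1)
    (X Y η : ℂ)
    (hX : X = (ζ ^ 2)⁻¹ * ((ζ ^ 2 * κ ^ 2 - 1) / (ζ ^ 2 - κ ^ 2)) ^ 3)
    (hY : Y = -((ζ - κ) * (κ * ζ + 1)) / ((κ * ζ - 1) * (ζ + κ)))
    (hη : η = (Y + Y⁻¹) * (κ ^ 2 + 1) ^ 2) :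
    u ^ 6 * (X ^ 2 + 1) * (Y + 1) ^ 2 +
      X * Y * ((κ ^ 2 + 1) ^ 8)⁻¹ *
        (η ^ 4 + 8 * (2 * κ ^ 2 - 1) * η ^ 3
          - 8 * (κ ^ 8 - 4 * κ ^ 4 + 12 * κ ^ 2 - 3) * η ^ 2
          - 32 * (2 * κ ^ 10 + 3 * κ ^ 8 + 8 * κ ^ 6 + 4 * κ ^ 4 - 6 * κ ^ 2 + 1) * η
          + 16 * (κ ^ 2 + 1) ^ 2 * (κ ^ 2 - 1) * (κ ^ 4 - 4 * κ ^ 2 + 1)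
            * (κ ^ 6 + 3 * κ ^ 4 + 5 * κ ^ 2 - 1)) = 0 := by
  have hκ2 : κ ^ 2 + 1 ≠ 0 := by rwa [hκ, ← pow_mul]
  have hu6 : u ^ 6 = 64 * κ ^ 8 / (κ ^ 2 + 1) ^ 6 := by
    rw [hu, hκ, two_mul_pow_four_div_pow_six]
  have hζκ : ζ - κ ≠ 0 := sub_ne_zero.mpr h1
  have hζκ' : ζ + κ ≠ 0 := by rwa [← sub_neg_eq_add, sub_ne_zero]
  have hκζ : κ * ζ - 1 ≠ 0 := sub_ne_zero.mpr h3
  have hκζ' : κ * ζ + 1 ≠ 0 := by rwa [← sub_neg_eq_add, sub_ne_zero]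
  have hP : ζ ^ 2 - κ ^ 2 ≠ 0 := by
    rw [sq_sub_sq]; exact mul_ne_zero hζκ' hζκ
  have hM : κ ^ 2 * ζ ^ 2 - 1 ≠ 0 := by
    rw [show κ ^ 2 * ζ ^ 2 - 1 = (κ * ζ - 1) * (κ * ζ + 1) by ring]
    exact mul_ne_zero hκζ hκζ'
  change Y = lmoY κ ζ at hY
  have hη' : η = -2 * (κ ^ 2 + 1) ^ 2 * (κ ^ 2 * (ζ ^ 2 - 1) ^ 2 + ζ ^ 2 * (κ ^ 2 - 1) ^ 2)
      / ((ζ ^ 2 - κ ^ 2) * (κ ^ 2 * ζ ^ 2 - 1)) := by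
    rw [hη, hY, lmoY_add_inv hκζ hζκ' hζκ hκζ']
    ring
  change u ^ 6 * (X ^ 2 + 1) * (Y + 1) ^ 2 + X * Y * ((κ ^ 2 + 1) ^ 8)⁻¹ * lmoQ₃ κ η = 0
  rw [hη', lmoQ₃_eq hP hM, hu6, hY, lmoY_add_one hκζ hζκ', lmoY_eq hκζ hζκ', hX]
  field_simp
  ring

/-- The rational parametrization `(X(ζ), Y(ζ))` satisfies the polynomial equation of the
LMO spectral curve of the `(2,2,3)` (D₅) Seifert geometry. -/
theorem stmt_4 (t ζ : ℂ) (ht : t ≠ 0) (hζ : ζ ≠ 0) (ht6 : t ^ 6 + 1 ≠ 0)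
    (κ u : ℂ) (hκ : κ = t ^ 3) (hu : u = 2 * t ^ 4 / (t ^ 6 + 1))
    (h1 : ζ ≠ κ) (h2 : ζ ≠ -κ) (h3 : κ * ζ ≠ 1) (h4 : κ * ζ ≠ -1)
    (X Y η : ℂ)
    (hX : X = (ζ ^ 2)⁻¹ * ((ζ ^ 2 * κ ^ 2 - 1) / (ζ ^ 2 - κ ^ 2)) ^ 3)
    (hY : Y = -((ζ - κ) * (κ * ζ + 1)) / ((κ * ζ - 1) * (ζ + κ)))
    (hη : η = (Y + Y⁻¹) * (κ ^ 2 + 1) ^ 2) :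
    u ^ 6 * (X ^ 2 + 1) * (Y + 1) ^ 2 +
      X * Y * ((κ ^ 2 + 1) ^ 8)⁻¹ *
        (η ^ 4 + 8 * (2 * κ ^ 2 - 1) * η ^ 3
          - 8 * (κ ^ 8 - 4 * κ ^ 4 + 12 * κ ^ 2 - 3) * η ^ 2
          - 32 * (2 * κ ^ 10 + 3 * κ ^ 8 + 8 * κ ^ 6 + 4 * κ ^ 4 - 6 * κ ^ 2 + 1) * η
          + 16 * (κ ^ 2 + 1) ^ 2 * (κ ^ 2 - 1) * (κ ^ 4 - 4 * κ ^ 2 + 1)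
            * (κ ^ 6 + 3 * κ ^ 4 + 5 * κ ^ 2 - 1)) = 0 :=
  stmt_4_general t ζ hζ ht6 κ u hκ hu h1 h2 h3 h4 X Y η hX hY hη
end

section
/- Let r ≥ 0, let b, b₁, …, b_r ∈ ℤ and a₁, …, a_r ∈ ℤ with a_m ≥ 1 and 0 ≤ b_m < a_m for each m. Let G be the group presented by generators h, c₀, c₁, …, c_r subject to the relations c₀h^b = 1, c_m^{a_m}h^{b_m} = 1 and c_m h c_m^{−1} h^{−1} = 1 for m = 1,…,r, and c₀c₁⋯c_r = 1. Set N = b·∏_{m=1}^r a_m + ∑_{m=1}^r b_m·∏_{l≠m} a_l. If N ≠ 0, then the abelianization of G is a finite group of cardinality |N|. -/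
/-! The abelianization of a group presented on generators `α` is `ℤ^α` modulo the span of the
exponent-sum vectors of the relators. The commutator relators contribute nothing, and the remaining
`r + 2` relators have an arrowhead matrix of exponent sums (rows `h, c₀, …, c_r`), whose determinant
`-N` is a Schur complement computation over `ℚ`. By the Smith normal form, the quotient of `ℤⁿ` by
the image of an integer matrix with nonzero determinant has order `|det|`. -/

open Matrix

theorem Matrix.card_quotient_range_toLin' {ι : Type*} [Fintype ι] [DecidableEq ι]
    (M : Matrix ι ι ℤ) (hM : M.det ≠ 0) :
    Nat.card ((ι → ℤ) ⧸ LinearMap.range M.toLin') = M.det.natAbs := by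
  have hinj : Function.Injective M.toLin' := by
    rw [← LinearMap.ker_eq_bot, LinearMap.ker_eq_bot']
    intro v hv
    by_contra hv0
    exact hM (exists_mulVec_eq_zero_iff.mp ⟨v, hv0, hv⟩)
  rw [← Submodule.natAbs_det_equiv _ (LinearEquiv.ofInjective _ hinj), ← LinearMap.det_toLin' M]
  rfl

theorem Matrix.det_fromBlocks_arrowhead {K n : Type*} [Field K] [Fintype n] [DecidableEq n]
    (x : K) (u v d : n → K) (hd : ∀ j, d j ≠ 0) :
    (fromBlocks (Matrix.of fun _ _ : Unit => x) (replicateRow Unit u) (replicateCol Unit v)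
      (diagonal d)).det = (∏ j, d j) * (x - ∑ j, u j * v j / d j) := by
  have hinv : diagonal d * diagonal (fun j => (d j)⁻¹) = 1 := by
    simp [diagonal_mul_diagonal, hd]
  let := invertibleOfRightInverse _ _ hinv
  rw [det_fromBlocks₂₂, det_diagonal, det_unique, invOf_eq_right_inv hinv]
  simp [mul_apply, diagonal_apply, div_eq_mul_inv, mul_right_comm]

namespace FreeGroup

variable {α : Type*} [DecidableEq α]

def exponentSum : FreeGroup α →* Multiplicative (α → ℤ) :=
  FreeGroup.lift fun x => .ofAdd (Pi.single x 1)

@[simp]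
theorem exponentSum_of (x : α) : exponentSum (of x) = .ofAdd (Pi.single x 1) :=
  lift_apply_of

theorem exists_exponentSum_eq [Fintype α] (v : α → ℤ) :
    ∃ w : FreeGroup α, (exponentSum w).toAdd = v := by
  refine ⟨(Finset.univ.toList.map fun x => of x ^ v x).prod, ?_⟩
  simp only [map_list_prod, List.map_map, Function.comp_def, map_zpow, exponentSum_of,
    Finset.prod_map_toList, ← ofAdd_zsmul, ← ofAdd_sum, ← Pi.single_smul, smul_eq_mul, mul_one]
  exact Finset.univ_sum_single _

theorem lift_ofAdd_single {A : Type*} [AddCommGroup A] (φ : (α → ℤ) →ₗ[ℤ] A)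
    (w : FreeGroup α) :
    lift (fun x => Multiplicative.ofAdd (φ (Pi.single x 1))) w =
      .ofAdd (φ (exponentSum w).toAdd) := by
  induction w using FreeGroup.induction_on <;> simp_all

def relationModule (rels : Set (FreeGroup α)) : Submodule ℤ (α → ℤ) :=
  Submodule.span ℤ ((fun w => (exponentSum w).toAdd) '' rels)

theorem exponentSum_mem_relationModule {rels : Set (FreeGroup α)} {w : FreeGroup α}
    (hw : w ∈ rels) : (exponentSum w).toAdd ∈ relationModule rels :=
  Submodule.subset_span ⟨w, hw, rfl⟩

theorem relationModule_eq_of_subset {s rels : Set (FreeGroup α)} (hs : s ⊆ rels)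
    (h : ∀ w ∈ rels, w ∈ s ∨ exponentSum w = 1) : relationModule rels = relationModule s := by
  refine le_antisymm (Submodule.span_le.mpr ?_) (Submodule.span_mono (Set.image_mono hs))
  rintro _ ⟨w, hw, rfl⟩
  rcases h w hw with hws | hw1
  · exact exponentSum_mem_relationModule hws
  · simp [hw1]

def relatorMatrix {ι : Type*} (R : ι → FreeGroup α) : Matrix α ι ℤ :=
  Matrix.of fun x j => (exponentSum (R j)).toAdd x

theorem relationModule_range [Fintype α] {ι : Type*} [Fintype ι] [DecidableEq ι]
    (R : ι → FreeGroup α) :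
    relationModule (Set.range R) = LinearMap.range (relatorMatrix R).toLin' := by
  rw [range_toLin', relationModule, ← Set.range_comp]
  rfl

end FreeGroup

namespace PresentedGroup

open FreeGroup

section

variable {α : Type*} [DecidableEq α] (rels : Set (FreeGroup α))

def abelianizationToQuotient :
    Additive (Abelianization (PresentedGroup rels)) →+ (α → ℤ) ⧸ relationModule rels :=
  MonoidHom.toAdditiveLeft <| Abelianization.lift <|
    toGroup (f := fun x => .ofAdd ((relationModule rels).mkQ (Pi.single x 1))) <| by
      intro w hw
      rw [lift_ofAdd_single]
      simpa using exponentSum_mem_relationModule hw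

theorem abelianizationToQuotient_mk (w : FreeGroup α) :
    abelianizationToQuotient rels (.ofMul (Abelianization.of (mk rels w))) =
      Submodule.Quotient.mk (exponentSum w).toAdd := by
  change Multiplicative.toAdd (FreeGroup.lift _ w) = _
  rw [lift_ofAdd_single]
  rfl

end

variable {α : Type*} [Fintype α] [DecidableEq α] (rels : Set (FreeGroup α))

def vectorToAbelianization : (α → ℤ) →ₗ[ℤ] Additive (Abelianization (PresentedGroup rels)) :=
  Fintype.linearCombination ℤ fun x => Additive.ofMul (Abelianization.of (of x))

theorem vectorToAbelianization_exponentSum (w : FreeGroup α) :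
    vectorToAbelianization rels (exponentSum w).toAdd =
      .ofMul (Abelianization.of (mk rels w)) := by
  induction w using FreeGroup.induction_on <;>
    simp_all [vectorToAbelianization, PresentedGroup.of]

def quotientToAbelianization :
    (α → ℤ) ⧸ relationModule rels →+ Additive (Abelianization (PresentedGroup rels)) :=
  ((relationModule rels).liftQ (vectorToAbelianization rels) <| by
      rw [relationModule, Submodule.span_le]
      rintro _ ⟨w, hw, rfl⟩
      simp [vectorToAbelianization_exponentSum, one_of_mem hw]).toAddMonoidHom

theorem quotientToAbelianization_mk (v : α → ℤ) :
    quotientToAbelianization rels (Submodule.Quotient.mk v) = vectorToAbelianization rels v :=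
  rfl

def abelianizationEquivQuotient :
    Additive (Abelianization (PresentedGroup rels)) ≃+ (α → ℤ) ⧸ relationModule rels :=
  AddMonoidHom.toAddEquiv (abelianizationToQuotient rels) (quotientToAbelianization rels)
    (by
      ext x
      simp [PresentedGroup.of, abelianizationToQuotient_mk, quotientToAbelianization,
        vectorToAbelianization, Fintype.linearCombination_apply_single])
    (by
      ext t
      obtain ⟨v, rfl⟩ := Submodule.Quotient.mk_surjective _ t
      obtain ⟨w, rfl⟩ := exists_exponentSum_eq v
      rw [AddMonoidHom.comp_apply, quotientToAbelianization_mk,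
        vectorToAbelianization_exponentSum, abelianizationToQuotient_mk, AddMonoidHom.id_apply])

theorem card_abelianization :
    Nat.card (Abelianization (PresentedGroup rels)) =
      Nat.card ((α → ℤ) ⧸ relationModule rels) :=
  Nat.card_congr (Additive.ofMul.trans (abelianizationEquivQuotient rels).toEquiv)

end PresentedGroup

open FreeGroup

def seifertRelator {r : ℕ} (b : ℤ) (a bb : Fin r → ℤ) :
    Unit ⊕ Fin (r + 1) → FreeGroup (Unit ⊕ Fin (r + 1)) :=
  Sum.elim (fun _ => (List.ofFn fun m : Fin (r + 1) => FreeGroup.of (Sum.inr m)).prod)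
    (Fin.cons (FreeGroup.of (Sum.inr 0) * FreeGroup.of (Sum.inl ()) ^ b)
      fun m => FreeGroup.of (Sum.inr m.succ) ^ a m * FreeGroup.of (Sum.inl ()) ^ bb m)

theorem relationModule_eq_range_seifertRelator {r : ℕ} (b : ℤ) (a bb : Fin r → ℤ)
    (rels : Set (FreeGroup (Unit ⊕ Fin (r + 1))))
    (hrels : rels =
      {FreeGroup.of (Sum.inr (0 : Fin (r + 1))) * (FreeGroup.of (Sum.inl ())) ^ b}
      ∪ (⋃ m : Fin r,
          {FreeGroup.of (Sum.inr m.succ) ^ (a m) * (FreeGroup.of (Sum.inl ())) ^ (bb m),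
           FreeGroup.of (Sum.inr m.succ) * FreeGroup.of (Sum.inl ())
             * (FreeGroup.of (Sum.inr m.succ))⁻¹ * (FreeGroup.of (Sum.inl ()))⁻¹})
      ∪ {(List.ofFn fun m : Fin (r + 1) => FreeGroup.of (Sum.inr m)).prod}) :
    relationModule rels = relationModule (Set.range (seifertRelator b a bb)) := by
  subst hrels
  apply relationModule_eq_of_subset
  · rintro _ ⟨_ | j, rfl⟩
    · exact Or.inr rfl
    · cases j using Fin.cases with
      | zero => exact Or.inl (Or.inl rfl)
      | succ m => exact Or.inl (Or.inr (Set.mem_iUnion.mpr ⟨m, Or.inl rfl⟩))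
  · rintro w ((rfl | hw) | rfl)
    · exact Or.inl ⟨Sum.inr 0, rfl⟩
    · obtain ⟨m, rfl | rfl⟩ := Set.mem_iUnion.mp hw
      · exact Or.inl ⟨Sum.inr m.succ, rfl⟩
      · right
        simp
    · exact Or.inl ⟨Sum.inl (), rfl⟩

theorem relatorMatrix_seifertRelator {r : ℕ} (b : ℤ) (a bb : Fin r → ℤ) :
    relatorMatrix (seifertRelator b a bb) =
      fromBlocks (Matrix.of fun _ _ : Unit => 0) (replicateRow Unit (Fin.cons b bb))
        (replicateCol Unit 1) (diagonal (Fin.cons 1 a)) := by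
  have hsum : (exponentSum (List.ofFn fun m : Fin (r + 1) => FreeGroup.of (Sum.inr m) :
      List (FreeGroup (Unit ⊕ Fin (r + 1)))).prod).toAdd = ∑ m, Pi.single (Sum.inr m) 1 := by
    rw [map_list_prod, List.map_ofFn, List.prod_ofFn]
    simp
  ext (_ | i) (_ | j)
  · simp only [relatorMatrix, seifertRelator, of_apply, Sum.elim_inl, hsum]
    simp
  · cases j using Fin.cases <;> simp [relatorMatrix, seifertRelator]
  · simp only [relatorMatrix, seifertRelator, of_apply, Sum.elim_inl, hsum]
    simp [Pi.single_apply]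
  · cases i using Fin.cases with
    | zero =>
      cases j using Fin.cases <;>
        simp [relatorMatrix, seifertRelator, (Fin.succ_ne_zero _).symm]
    | succ k =>
      cases j using Fin.cases with
      | zero => simp [relatorMatrix, seifertRelator]
      | succ m =>
        by_cases h : k = m <;> simp [relatorMatrix, seifertRelator, h]

theorem det_relatorMatrix_seifertRelator {r : ℕ} (b : ℤ) (a bb : Fin r → ℤ)
    (ha : ∀ m, a m ≠ 0) :
    (relatorMatrix (seifertRelator b a bb)).det =
      -(b * ∏ m, a m + ∑ m, bb m * ∏ l ∈ Finset.univ.erase m, a l) := by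
  have hmap : (relatorMatrix (seifertRelator b a bb)).map (Int.cast : ℤ → ℚ) =
      fromBlocks (Matrix.of fun _ _ : Unit => 0)
        (replicateRow Unit (Fin.cons (b : ℚ) fun m => (bb m : ℚ)))
        (replicateCol Unit 1) (diagonal (Fin.cons 1 fun m => (a m : ℚ))) := by
    rw [relatorMatrix_seifertRelator]
    ext (_ | i) (_ | j)
    · simp
    · cases j using Fin.cases <;> simp
    · simp
    · cases i using Fin.cases <;> cases j using Fin.cases <;> simp [diagonal_apply]
  have hd : ∀ j, (Fin.cons 1 fun m => (a m : ℚ) : Fin (r + 1) → ℚ) j ≠ 0 :=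
    Fin.cases one_ne_zero fun m => Int.cast_ne_zero.mpr (ha m)
  have hterm : ∀ m, (∏ l, (a l : ℚ)) * (bb m / a m) =
      bb m * ∏ l ∈ Finset.univ.erase m, (a l : ℚ) := by
    intro m
    rw [← Finset.mul_prod_erase _ _ (Finset.mem_univ m)]
    field_simp [Int.cast_ne_zero.mpr (ha m)]
  apply Int.cast_injective (α := ℚ)
  rw [Int.cast_det, hmap, det_fromBlocks_arrowhead _ _ _ _ hd, Fin.prod_cons, Fin.sum_univ_succ]
  push_cast
  simp only [Fin.cons_zero, Fin.cons_succ, Pi.one_apply, mul_one, div_one, one_mul]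
  rw [mul_sub, mul_add, Finset.mul_sum, Finset.sum_congr rfl fun m _ => hterm m]
  ring

theorem stmt_11_general (r : ℕ) (b : ℤ) (a bb : Fin r → ℤ)
    (ha : ∀ m, 1 ≤ a m)
    (N : ℤ)
    (hN : N = b * ∏ m, a m + ∑ m, bb m * ∏ l ∈ Finset.univ.erase m, a l)
    (hN0 : N ≠ 0)
    (rels : Set (FreeGroup (Unit ⊕ Fin (r + 1))))
    (hrels : rels =
      {FreeGroup.of (Sum.inr (0 : Fin (r + 1))) * (FreeGroup.of (Sum.inl ())) ^ b}
      ∪ (⋃ m : Fin r,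
          {FreeGroup.of (Sum.inr m.succ) ^ (a m) * (FreeGroup.of (Sum.inl ())) ^ (bb m),
           FreeGroup.of (Sum.inr m.succ) * FreeGroup.of (Sum.inl ())
             * (FreeGroup.of (Sum.inr m.succ))⁻¹ * (FreeGroup.of (Sum.inl ()))⁻¹})
      ∪ {(List.ofFn fun m : Fin (r + 1) => FreeGroup.of (Sum.inr m)).prod}) :
    Finite (Abelianization (PresentedGroup rels)) ∧
    Nat.card (Abelianization (PresentedGroup rels)) = N.natAbs := by
  have hdet : (relatorMatrix (seifertRelator b a bb)).det = -N := by
    rw [hN, det_relatorMatrix_seifertRelator b a bb fun m => (one_pos.trans_le (ha m)).ne']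
  have hcard : Nat.card (Abelianization (PresentedGroup rels)) = N.natAbs := by
    rw [PresentedGroup.card_abelianization,
      relationModule_eq_range_seifertRelator b a bb rels hrels, relationModule_range, card_quotient_range_toLin' _ (by simpa [hdet] using hN0), hdet,
      Int.natAbs_neg]
  exact ⟨Nat.finite_of_card_ne_zero (by simpa [hcard] using hN0), hcard⟩

/-- The abelianization of the fundamental group of a Seifert fibered space with Seifert
data `(b; b₁/a₁, …, b_r/a_r)` is finite of cardinality `|N|`, where
`N = b·∏ a_m + ∑_m b_m·∏_{l ≠ m} a_l`, whenever `N ≠ 0`.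
Generators: `Sum.inl () = h`, `Sum.inr m = c_m` for `m : Fin (r+1)` (so `c₀, …, c_r`). -/
theorem stmt_11 (r : ℕ) (b : ℤ) (a bb : Fin r → ℤ)
    (ha : ∀ m, 1 ≤ a m) (hbb : ∀ m, 0 ≤ bb m ∧ bb m < a m)
    (N : ℤ)
    (hN : N = b * ∏ m, a m + ∑ m, bb m * ∏ l ∈ Finset.univ.erase m, a l)
    (hN0 : N ≠ 0)
    (rels : Set (FreeGroup (Unit ⊕ Fin (r + 1))))
    (hrels : rels =
      {FreeGroup.of (Sum.inr (0 : Fin (r + 1))) * (FreeGroup.of (Sum.inl ())) ^ b}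
      ∪ (⋃ m : Fin r,
          {FreeGroup.of (Sum.inr m.succ) ^ (a m) * (FreeGroup.of (Sum.inl ())) ^ (bb m),
           FreeGroup.of (Sum.inr m.succ) * FreeGroup.of (Sum.inl ())
             * (FreeGroup.of (Sum.inr m.succ))⁻¹ * (FreeGroup.of (Sum.inl ()))⁻¹})
      ∪ {(List.ofFn fun m : Fin (r + 1) => FreeGroup.of (Sum.inr m)).prod}) :
    Finite (Abelianization (PresentedGroup rels)) ∧
    Nat.card (Abelianization (PresentedGroup rels)) = N.natAbs :=
  stmt_11_general r b a bb ha N hN hN0 rels hrels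
end

section
/- Let k ≥ 1 and k' ≥ 0 be integers. The abelianization of the group presented by generators x, y subject to the relations x^{2^k} = 1, y^{2k'+1} = 1 and x y x^{−1} y = 1 is a cyclic group of order 2^k (i.e. isomorphic to ℤ/2^kℤ). -/
/-- The abelianization of `B_{2^k·(2k'+1)} = ⟨x, y | x^{2^k} = y^{2k'+1} = xyx⁻¹y = 1⟩`
is cyclic of order `2^k`, i.e. isomorphic to `ℤ/2^kℤ`.
Generators: `true = x`, `false = y`. -/
theorem stmt_13 (k k' : ℕ) (hk : 1 ≤ k)
    (rels : Set (FreeGroup Bool))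
    (hrels : rels =
      {FreeGroup.of true ^ (2 ^ k),
       FreeGroup.of false ^ (2 * k' + 1),
       FreeGroup.of true * FreeGroup.of false * (FreeGroup.of true)⁻¹ * FreeGroup.of false}) :
    Nonempty (Abelianization (PresentedGroup rels) ≃*
      Multiplicative (ZMod (2 ^ k))) := by
  classical
  have mem1 : (FreeGroup.of true ^ (2 ^ k)) ∈ rels := by rw [hrels]; left; rfl
  have mem2 : (FreeGroup.of false ^ (2 * k' + 1)) ∈ rels := by rw [hrels]; right; left; rfl
  have mem3 : (FreeGroup.of true * FreeGroup.of false * (FreeGroup.of true)⁻¹ *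
      FreeGroup.of false) ∈ rels := by rw [hrels]; right; right; rfl
  have key : ∀ r ∈ rels, PresentedGroup.mk rels r = 1 := fun r hr =>
    (QuotientGroup.eq_one_iff r).mpr (Subgroup.subset_normalClosure hr)
  set A := Abelianization (PresentedGroup rels) with hA
  set ab : PresentedGroup rels →* A := Abelianization.of with hab
  set a : A := ab (PresentedGroup.of true) with ha'
  set b : A := ab (PresentedGroup.of false) with hb'
  have hofT : PresentedGroup.of (rels := rels) true =
      PresentedGroup.mk rels (FreeGroup.of true) := rfl
  have hofF : PresentedGroup.of (rels := rels) false =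
      PresentedGroup.mk rels (FreeGroup.of false) := rfl
  have ha : a ^ (2 ^ k) = 1 := by
    have h := key _ mem1
    rw [map_pow] at h
    rw [ha', hofT, ← map_pow, h, map_one]
  have hbodd : b ^ (2 * k' + 1) = 1 := by
    have h := key _ mem2
    rw [map_pow] at h
    rw [hb', hofF, ← map_pow, h, map_one]
  have hb2 : b ^ 2 = 1 := by
    have h := key _ mem3
    simp only [map_mul, map_inv] at h
    have h2 : a * b * a⁻¹ * b = 1 := by
      rw [ha', hb', hofT, hofF, ← map_inv, ← map_mul, ← map_mul, ← map_mul, h, map_one]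
    calc b ^ 2 = a * b * a⁻¹ * b := by rw [pow_two]; rw [mul_comm a b]; group
    _ = 1 := h2
  have hb : b = 1 := by
    have : b = b ^ (2 * k' + 1) := by
      rw [pow_succ, two_mul, pow_add]
      have h1 : b ^ k' * b ^ k' = 1 := by
        rw [← pow_add, ← two_mul, pow_mul, hb2, one_pow]
      rw [h1, one_mul]
    rw [this, hbodd]
  -- the forward homomorphism
  have hf : ∀ r ∈ rels, FreeGroup.lift
      (fun x : Bool => if x then Multiplicative.ofAdd (1 : ZMod (2 ^ k)) else 1) r = 1 := by
    intro r hr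
    rw [hrels] at hr
    rcases hr with rfl | rfl | rfl
    · rw [map_pow, FreeGroup.lift_apply_of, if_pos rfl, ← ofAdd_nsmul]
      simp [nsmul_eq_mul, ZMod.natCast_self]
    · rw [map_pow, FreeGroup.lift_apply_of, if_neg (by simp), one_pow]
    · simp
  set φG : PresentedGroup rels →* Multiplicative (ZMod (2 ^ k)) := PresentedGroup.toGroup hf
    with hφG
  set φ : A →* Multiplicative (ZMod (2 ^ k)) := Abelianization.lift φG with hφ
  -- the backward homomorphism
  have hg : (zmultiplesHom (Additive A) (Additive.ofMul a)) ((2 ^ k : ℕ) : ℤ) = 0 := by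
    show ((2 ^ k : ℕ) : ℤ) • Additive.ofMul a = 0
    rw [← ofMul_zpow, zpow_natCast, ha, ofMul_one]
  set ψ0 : ZMod (2 ^ k) →+ Additive A :=
    ZMod.lift (2 ^ k) ⟨zmultiplesHom (Additive A) (Additive.ofMul a), by exact_mod_cast hg⟩
    with hψ0
  set ψ : Multiplicative (ZMod (2 ^ k)) →* A := AddMonoidHom.toMultiplicativeLeft ψ0 with hψ
  have hψa : ∀ m : ℤ, ψ (Multiplicative.ofAdd ((m : ZMod (2 ^ k)))) = a ^ m := by
    intro m
    show Additive.toMul (ψ0 ((m : ZMod (2 ^ k)))) = a ^ m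
    rw [hψ0, ZMod.lift_coe]
    show Additive.toMul (m • Additive.ofMul a) = a ^ m
    rw [← ofMul_zpow]
    rfl
  have hφa : φ a = Multiplicative.ofAdd (1 : ZMod (2 ^ k)) := by
    rw [ha', hφ]
    show φG (PresentedGroup.of true) = _
    rw [hφG, PresentedGroup.toGroup.of, if_pos rfl]
  have hcomp1 : ψ.comp φ = MonoidHom.id A := by
    apply Abelianization.hom_ext
    apply PresentedGroup.ext
    intro x
    cases x
    · show ψ (φ b) = b
      rw [hb, map_one, map_one]
    · show ψ (φ a) = a
      rw [hφa]
      have := hψa 1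
      rw [Int.cast_one, zpow_one] at this
      exact this
  have hcomp2 : φ.comp ψ = MonoidHom.id (Multiplicative (ZMod (2 ^ k))) := by
    apply MonoidHom.ext; intro x
    obtain ⟨m, hm⟩ := ZMod.intCast_surjective (Multiplicative.toAdd x)
    have hx : x = Multiplicative.ofAdd ((m : ZMod (2 ^ k))) := by
      rw [hm, ofAdd_toAdd]
    rw [MonoidHom.comp_apply, MonoidHom.id_apply, hx, hψa, map_zpow, hφa, ← ofAdd_zsmul]
    congr 1
    simp [zsmul_eq_mul]
  exact ⟨MonoidHom.toMulEquiv φ ψ hcomp1 hcomp2⟩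
end

section
/- Let p ≥ 2 be an even integer, let ζ ∈ ℂ be a primitive p-th root of unity, let x ∈ ℂ with x ≠ 0, and let y ∈ ℂ. Then (−x)^{p/2} · ∏_{ℓ=0}^{p−1} ( y − ζ^{(−1)^ℓ·ℓ} · (−x)^{(−1)^ℓ} ) = ( (−x)^{p/2}·y^{p/2} + 1 ) · ( y^{p/2} − (−x)^{p/2} ), where for odd ℓ the factor is y − ζ^{−ℓ}·(−x)^{−1}. -/
/-!
Split the orbit into even and odd sheets. With `u = -x` and `p = 2m`, the even sheets are
`y - u ω^k` and the odd ones `y - (ζ u)⁻¹ ω⁻ᵏ` for `k < m`, where `ω = ζ²` is a primitive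
`m`-th root of unity. Hence the two halves multiply to `y^m - u^m` and `y^m - (ζ u)^{-m}`,
and `ζ^m = -1` turns the latter into `y^m + u^{-m}`.
-/

open Finset Polynomial

theorem Finset.prod_range_two_mul {M : Type*} [CommMonoid M] (m : ℕ) (f : ℕ → M) :
    ∏ i ∈ range (2 * m), f i = (∏ k ∈ range m, f (2 * k)) * ∏ k ∈ range m, f (2 * k + 1) := by
  induction m with
  | zero => simp
  | succ m ih =>
    rw [show 2 * (m + 1) = 2 * m + 1 + 1 by ring, prod_range_succ, prod_range_succ, ih,
      prod_range_succ, prod_range_succ]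
    ac_rfl

namespace IsPrimitiveRoot

theorem prod_range_sub_mul_pow {R : Type*} [CommRing R] [IsDomain R] {ω : R} {m : ℕ}
    (hω : IsPrimitiveRoot ω m) (hm : 0 < m) (c y : R) :
    ∏ k ∈ range m, (y - c * ω ^ k) = y ^ m - c ^ m := by
  simpa [eval_prod, mul_comm] using (congrArg (eval y) (X_pow_sub_C_eq_prod hω hm rfl)).symm

theorem pow_eq_neg_one_of_two_mul {R : Type*} [CommRing R] [IsDomain R] {ζ : R} {m : ℕ}
    (hζ : IsPrimitiveRoot ζ (2 * m)) (hm : 0 < m) : ζ ^ m = -1 := by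
  apply eq_neg_one_of_two_right
  simpa [hm.ne'] using hζ.pow_of_dvd hm.ne' (dvd_mul_left m 2)

end IsPrimitiveRoot

section Sheets

variable {K : Type*} [Field K] {ζ : K} {m : ℕ}

theorem prod_even_sheets (hζ : IsPrimitiveRoot ζ (2 * m)) (hm : 0 < m) (u y : K) :
    ∏ k ∈ range m, (y - ζ ^ ((-1 : ℤ) ^ (2 * k) * ↑(2 * k)) * u ^ ((-1 : ℤ) ^ (2 * k))) =
      y ^ m - u ^ m := by
  have hω : IsPrimitiveRoot (ζ ^ 2) m := hζ.pow (by omega) rfl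
  rw [← hω.prod_range_sub_mul_pow hm u y]
  refine prod_congr rfl fun k _ => ?_
  rw [pow_mul, neg_one_sq, one_pow, one_mul, zpow_one, zpow_natCast, pow_mul, mul_comm]

theorem prod_odd_sheets (hζ : IsPrimitiveRoot ζ (2 * m)) (hm : 0 < m) (u y : K) :
    ∏ k ∈ range m,
        (y - ζ ^ ((-1 : ℤ) ^ (2 * k + 1) * ↑(2 * k + 1)) * u ^ ((-1 : ℤ) ^ (2 * k + 1))) =
      y ^ m + (u ^ m)⁻¹ := by
  have hω : IsPrimitiveRoot (ζ⁻¹ ^ 2) m := hζ.inv.pow (by omega) rfl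
  have hc : ((ζ * u)⁻¹) ^ m = -(u ^ m)⁻¹ := by
    rw [inv_pow, mul_pow, hζ.pow_eq_neg_one_of_two_mul hm]
    ring
  rw [← sub_neg_eq_add, ← hc, ← hω.prod_range_sub_mul_pow hm]
  refine prod_congr rfl fun k _ => ?_
  rw [pow_succ, pow_mul, neg_one_sq, one_pow, one_mul, neg_one_mul, zpow_neg, zpow_neg, zpow_one,
    zpow_natCast, ← pow_mul, ← inv_pow, pow_succ]
  ring

theorem prod_sheets (hζ : IsPrimitiveRoot ζ (2 * m)) (hm : 0 < m) {u : K} (hu : u ≠ 0) (y : K) :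
    u ^ m * ∏ ℓ ∈ range (2 * m), (y - ζ ^ ((-1 : ℤ) ^ ℓ * ℓ) * u ^ ((-1 : ℤ) ^ ℓ)) =
      (u ^ m * y ^ m + 1) * (y ^ m - u ^ m) := by
  rw [prod_range_two_mul, prod_even_sheets hζ hm, prod_odd_sheets hζ hm]
  field_simp [pow_ne_zero m hu]

end Sheets

/-- Product identity for the `c = 1` limit of the LMO spectral curve of the `D_{p+2}`
geometry, `p` even: the product over the monodromy orbit of the sheet factors
`y - ζ^{(-1)^ℓ ℓ} (-x)^{(-1)^ℓ}` factorizes as stated. -/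
theorem stmt_15 (p : ℕ) (hp : 2 ≤ p) (hpeven : Even p)
    (ζ : ℂ) (hζ : IsPrimitiveRoot ζ p) (x : ℂ) (hx : x ≠ 0) (y : ℂ) :
    (-x) ^ (p / 2) *
      ∏ ℓ ∈ Finset.range p,
        (y - ζ ^ ((-1 : ℤ) ^ ℓ * ℓ) * (-x) ^ ((-1 : ℤ) ^ ℓ))
    = ((-x) ^ (p / 2) * y ^ (p / 2) + 1) * (y ^ (p / 2) - (-x) ^ (p / 2)) := by
  obtain ⟨m, rfl⟩ := hpeven
  rw [← two_mul] at hζ ⊢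
  rw [Nat.mul_div_cancel_left m two_pos]
  exact prod_sheets hζ (by omega) (neg_ne_zero.mpr hx) y
end

section
/- For all x, y ∈ ℂ, the following polynomial identity holds: (y + 1)²(y² + y + 1)³(y⁴ + y³ + y² + y + 1)⁵ · (x³⁰ + y⁵)(x³⁰y⁵ + 1)(x³⁰ − y⁶)(x³⁰y⁶ − 1)(x³⁰ − y¹⁰)²(x³⁰y¹⁰ − 1)²(x⁶⁰ − y¹⁵)(x³⁰ + y¹⁵)²(x³⁰y¹⁵ + 1)²(x⁶⁰y¹⁵ − 1)(x³⁰ − y³⁰)(x³⁰y³⁰ − 1) · (y − 1)⁸ = −(y + 1)²(y³ − 1)³(y⁵ − 1)⁵ · (y³⁰ − x³⁰)(y³⁰x³⁰ − 1)(y¹⁵ + x³⁰)²(y¹⁵x³⁰ + 1)²(y¹⁰ − x³⁰)²(y¹⁰x³⁰ − 1)²(y¹⁵ − x⁶⁰)(y¹⁵x⁶⁰ − 1)(y⁶ − x³⁰)(y⁶x³⁰ − 1)(y⁵ + x³⁰)(y⁵x³⁰ + 1). -/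
/-!
Away from the prefactor in `y` alone, every factor of the LMO curve is a factor of the Toda
curve with its two terms swapped, and the swap costs a sign exactly for the four differences
`y ^ m - x ^ n`. Three of them occur to an odd power, which produces the overall minus sign,
and the cyclotomic factorisations of `y ^ 3 - 1` and `y ^ 5 - 1` absorb the adjoint factor
`(y - 1) ^ 8`.
-/

/-- Exact agreement between the E₈ Toda spectral curve at the conifold point (times the
adjoint factor `(y-1)⁸`) and (minus) the `λ → 0` limit of the LMO curve of the Poincaré
sphere. -/
theorem stmt_16 :
    ∀ x y : ℂ,
      (y + 1) ^ 2 * (y ^ 2 + y + 1) ^ 3 * (y ^ 4 + y ^ 3 + y ^ 2 + y + 1) ^ 5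
        * (x ^ 30 + y ^ 5) * (x ^ 30 * y ^ 5 + 1)
        * (x ^ 30 - y ^ 6) * (x ^ 30 * y ^ 6 - 1)
        * (x ^ 30 - y ^ 10) ^ 2 * (x ^ 30 * y ^ 10 - 1) ^ 2
        * (x ^ 60 - y ^ 15)
        * (x ^ 30 + y ^ 15) ^ 2 * (x ^ 30 * y ^ 15 + 1) ^ 2
        * (x ^ 60 * y ^ 15 - 1)
        * (x ^ 30 - y ^ 30) * (x ^ 30 * y ^ 30 - 1)
        * (y - 1) ^ 8
      = -((y + 1) ^ 2 * (y ^ 3 - 1) ^ 3 * (y ^ 5 - 1) ^ 5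
        * (y ^ 30 - x ^ 30) * (y ^ 30 * x ^ 30 - 1)
        * (y ^ 15 + x ^ 30) ^ 2 * (y ^ 15 * x ^ 30 + 1) ^ 2
        * (y ^ 10 - x ^ 30) ^ 2 * (y ^ 10 * x ^ 30 - 1) ^ 2
        * (y ^ 15 - x ^ 60) * (y ^ 15 * x ^ 60 - 1)
        * (y ^ 6 - x ^ 30) * (y ^ 6 * x ^ 30 - 1)
        * (y ^ 5 + x ^ 30) * (y ^ 5 * x ^ 30 + 1)) := by
  intro x y
  -- Raised to their powers already: `mul_pow` would bring in a multiplication instance that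
  -- `ac_rfl` does not identify with the one in the statement.
  have cube : (y ^ 3 - 1) ^ 3 = (y - 1) ^ 3 * (y ^ 2 + y + 1) ^ 3 := by ring
  have fifth : (y ^ 5 - 1) ^ 5 = (y - 1) ^ 5 * (y ^ 4 + y ^ 3 + y ^ 2 + y + 1) ^ 5 := by ring
  have adjoint : (y - 1) ^ 8 = (y - 1) ^ 3 * (y - 1) ^ 5 := pow_add _ 3 5
  have swap_sub (m n : ℕ) : y ^ m - x ^ n = -(x ^ n - y ^ m) := (neg_sub _ _).symm
  have swap_add (m n : ℕ) : y ^ m + x ^ n = x ^ n + y ^ m := add_comm _ _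
  have swap_mul (m n : ℕ) : y ^ m * x ^ n = x ^ n * y ^ m := mul_comm _ _
  simp only [cube, fifth, adjoint, swap_sub, swap_add, swap_mul, neg_sq, neg_mul, mul_neg,
    neg_neg]
  ac_rfl
end
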